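/- Let F : X ⇒ Y be a set-valued mapping between real vector spaces whose graph gph(F) := {(x, y) : y ∈ F(x)} is convex and core-solid. Then core(gph(F)) = {(x, y) ∈ X × Y : x ∈ core(dom(F)) and y ∈ core(F(x))}, where dom(F) := {x : F(x) ≠ ∅}. -/

import Mathlib

open Pointwise Set

/-- Algebraic core (algebraic interior) of a set in a real vector space. -/
def algCore {X : Type*} [AddCommGroup X] [Module ℝ X] (Ω : Set X) : Set X :=
  {x | x ∈ Ω ∧ ∀ v : X, ∃ δ : ℝ, 0 < δ ∧ ∀ t : ℝ, |t| < δ → x + t • v ∈ Ω}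

/-- Normal cone to a convex set `Ω` at `xbar`, consisting of linear functionals. -/
def normalCone {X : Type*} [AddCommGroup X] [Module ℝ X] (xbar : X) (Ω : Set X) :
    Set (X →ₗ[ℝ] ℝ) :=
  {f | ∀ x ∈ Ω, f (x - xbar) ≤ 0}

/-- Extremal system of two sets in a vector space. -/
def IsExtremal {X : Type*} [AddCommGroup X] [Module ℝ X] (Ω₁ Ω₂ : Set X) : Prop :=
  ∃ x₀ : X, ∀ δ : ℝ, 0 < δ → ∃ t₀ : ℝ, |t₀| < δ ∧
    ((fun w => w + t₀ • x₀) '' Ω₁) ∩ Ω₂ = ∅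

/-- Domain of a set-valued mapping. -/
def svDom {X Y : Type*} (F : X → Set Y) : Set X := {x | (F x).Nonempty}

/-- Graph of a set-valued mapping. -/
def svGraph {X Y : Type*} (F : X → Set Y) : Set (X × Y) := {p | p.2 ∈ F p.1}

/-- Coderivative of a set-valued mapping `F` at `(xbar, ybar) ∈ gph F` applied to a linear
functional `g`: the set of linear `f` with `(f, -g)` in the normal cone to the graph. -/
def coderiv {X Y : Type*} [AddCommGroup X] [Module ℝ X] [AddCommGroup Y] [Module ℝ Y]
    (F : X → Set Y) (xbar : X) (ybar : Y) (g : Y →ₗ[ℝ] ℝ) : Set (X →ₗ[ℝ] ℝ) :=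
  {f | ∀ x : X, ∀ y ∈ F x, f (x - xbar) - g (y - ybar) ≤ 0}

/-- Subdifferential (of linear functionals) of an extended-real-valued function. -/
def subdiff {X : Type*} [AddCommGroup X] [Module ℝ X] (φ : X → EReal) (xbar : X) :
    Set (X →ₗ[ℝ] ℝ) :=
  {f | ∀ x : X, φ xbar + (f (x - xbar) : EReal) ≤ φ x}

/-- Effective domain of an extended-real-valued function with values in `ℝ ∪ {+∞}`. -/
def fDom {X : Type*} (φ : X → EReal) : Set X := {x | φ x < ⊤}

/-- Epigraph of an extended-real-valued function. -/
def epi {X : Type*} (φ : X → EReal) : Set (X × ℝ) := {p | φ p.1 ≤ (p.2 : EReal)}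

/-- Convexity of an extended-real-valued function (with values in `ℝ ∪ {+∞}`). -/
def ConvexFun {X : Type*} [AddCommGroup X] [Module ℝ X] (φ : X → EReal) : Prop :=
  ∀ x y : X, ∀ t : ℝ, 0 ≤ t → t ≤ 1 →
    φ (t • x + (1 - t) • y) ≤ (t : EReal) * φ x + ((1 - t : ℝ) : EReal) * φ y

/-- Composition of set-valued mappings. -/
def svComp {X Y Z : Type*} (G : Y → Set Z) (F : X → Set Y) : X → Set Z :=
  fun x => ⋃ y ∈ F x, G y

/-- The linear functional on `X × Y` identified with a pair `(f, g)` of linear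
functionals on `X` and `Y`. -/
def pairFun {X Y : Type*} [AddCommGroup X] [Module ℝ X] [AddCommGroup Y] [Module ℝ Y]
    (f : X →ₗ[ℝ] ℝ) (g : Y →ₗ[ℝ] ℝ) : X × Y →ₗ[ℝ] ℝ :=
  f ∘ₗ LinearMap.fst ℝ X Y + g ∘ₗ LinearMap.snd ℝ X Y

/-! Let `c` be a core point of the convex graph. A point `x ∈ core(dom F)` can be pushed a little
beyond itself, away from `c.1`, to some `x' ∈ dom F`; so `x` lies strictly between `x'` and `c.1`,
and the corresponding convex combination of `(x', y')` and `c` is a core point `(x, ỹ)` of the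
graph. Repeating the argument inside the fibre `F x`, with `y ∈ core(F x)` and the core point
`(x, ỹ)`, shows that `(x, y)` is a core point of the graph. The other inclusion only uses the
directions `(v, 0)` and `(0, w)`. -/

section AlgCore

variable {Z W : Type*} [AddCommGroup Z] [Module ℝ Z] [AddCommGroup W] [Module ℝ W]

theorem Convex.combo_mem_algCore {Ω : Set Z} (hconv : Convex ℝ Ω) {c q : Z}
    (hc : c ∈ algCore Ω) (hq : q ∈ Ω) {s : ℝ} (hs : 0 < s) (hs1 : s ≤ 1) :
    (1 - s) • q + s • c ∈ algCore Ω := by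
  refine ⟨hconv hq hc.1 (by linarith) hs.le (by ring), fun v => ?_⟩
  obtain ⟨δ, hδ, hmem⟩ := hc.2 v
  refine ⟨s * δ, by positivity, fun t ht => ?_⟩
  have hshift : c + (t / s) • v ∈ Ω := by
    apply hmem
    rw [abs_div, abs_of_pos hs, div_lt_iff₀ hs]
    linarith
  have heq : (1 - s) • q + s • c + t • v = (1 - s) • q + s • (c + (t / s) • v) := by
    rw [smul_add, smul_smul, mul_div_cancel₀ t hs.ne']
    abel
  rw [heq]
  exact hconv hq hshift (by linarith) hs.le (by ring)

theorem exists_mem_eq_combo_of_mem_algCore {A : Set Z} {x : Z} (hx : x ∈ algCore A) (c : Z) :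
    ∃ q ∈ A, ∃ s : ℝ, 0 < s ∧ s ≤ 1 ∧ x = (1 - s) • q + s • c := by
  obtain ⟨δ, hδ, hmem⟩ := hx.2 (x - c)
  have ht : 0 < δ / 2 := by positivity
  refine ⟨x + (δ / 2) • (x - c), hmem _ (by rw [abs_of_pos ht]; linarith),
    (δ / 2) / (1 + δ / 2), by positivity, (div_le_one (by linarith)).2 (by linarith), ?_⟩
  match_scalars <;> field_simp <;> ring

theorem LinearMap.image_algCore_subset (f : Z →ₗ[ℝ] W) (hf : Function.Surjective f)
    (Ω : Set Z) : f '' algCore Ω ⊆ algCore (f '' Ω) := by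
  rintro _ ⟨x, hx, rfl⟩
  refine ⟨⟨x, hx.1, rfl⟩, fun w => ?_⟩
  obtain ⟨v, rfl⟩ := hf w
  obtain ⟨δ, hδ, hmem⟩ := hx.2 v
  exact ⟨δ, hδ, fun t ht => ⟨x + t • v, hmem t ht, by simp⟩⟩

theorem mem_algCore_preimage_mk {Ω : Set (Z × W)} {x : Z} {y : W} (h : (x, y) ∈ algCore Ω) :
    y ∈ algCore (Prod.mk x ⁻¹' Ω) := by
  refine ⟨h.1, fun w => ?_⟩
  obtain ⟨δ, hδ, hmem⟩ := h.2 (0, w)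
  exact ⟨δ, hδ, fun t ht => by simpa using hmem t ht⟩

end AlgCore

theorem svDom_eq_image_fst {X Y : Type*} (F : X → Set Y) :
    svDom F = Prod.fst '' svGraph F := by
  ext x
  exact ⟨fun ⟨y, hy⟩ => ⟨(x, y), hy, rfl⟩, by rintro ⟨⟨x, y⟩, hy, rfl⟩; exact ⟨y, hy⟩⟩

/-- core of a core-solid convex graph of a set-valued mapping. -/
theorem core_of_graph {X Y : Type*} [AddCommGroup X] [Module ℝ X]
    [AddCommGroup Y] [Module ℝ Y] (F : X → Set Y)
    (hconv : Convex ℝ (svGraph F)) (hsolid : (algCore (svGraph F)).Nonempty) :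
    algCore (svGraph F) =
      {p : X × Y | p.1 ∈ algCore (svDom F) ∧ p.2 ∈ algCore (F p.1)} := by
  ext ⟨x, y⟩
  constructor
  · intro h
    refine ⟨?_, mem_algCore_preimage_mk h⟩
    rw [svDom_eq_image_fst]
    exact (LinearMap.fst ℝ X Y).image_algCore_subset LinearMap.fst_surjective _ ⟨_, h, rfl⟩
  · rintro ⟨hx, hy : y ∈ algCore (F x)⟩
    obtain ⟨c, hc⟩ := hsolid
    obtain ⟨x', ⟨y', hy'⟩, s, hs, hs1, hxeq⟩ := exists_mem_eq_combo_of_mem_algCore (x := x) hx c.1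
    have hmid : (x, (1 - s) • y' + s • c.2) ∈ algCore (svGraph F) := by
      convert hconv.combo_mem_algCore hc (q := (x', y')) hy' hs hs1 using 1
      ext <;> simp [hxeq]
    obtain ⟨y'', hy'', σ, hσ, hσ1, hyeq⟩ := exists_mem_eq_combo_of_mem_algCore hy
      ((1 - s) • y' + s • c.2)
    convert hconv.combo_mem_algCore hmid (q := (x, y'')) hy'' hσ hσ1 using 1
    ext
    · simp [← add_smul]
    · simp [hyeq]
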